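/- arXiv:1805.11565 — 3 statements merged into one kernel-verified Lean document; each statement's English description precedes it below -/
import Mathlib

section
/- Let H be a real Hilbert space and Φ_K : ℝ^s → H a feature map with B := sup_{a ∈ ℝ^s} ‖Φ_K(a)‖ < ∞ and ‖Φ_K(a) − Φ_K(b)‖ ≤ L_K ‖a − b‖ for all a, b ∈ ℝ^s. Let {φ_ψ : ℝ^d → ℝ^s}_{ψ ∈ Ψ} be a family of maps that are uniformly Lipschitz: ‖φ_ψ(x) − φ_ψ(y)‖ ≤ L_φ ‖x − y‖ for all ψ ∈ Ψ and x, y ∈ ℝ^d. If (P_n) is a sequence of Borel probability measures on ℝ^d converging weakly (in distribution) to P, then sup_{ψ ∈ Ψ} MMD_{k_ψ}(P_n, P) → 0 as n → ∞, where k_ψ is the kernel with feature map Φ_K ∘ φ_ψ. -/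
/-!
Weak convergence of probability measures on a separable metric space implies convergence in the
Lévy–Prokhorov distance `π`. If `π(μ, ν) < ε`, then `μ A ≤ ν (A^ε) + ε` for measurable `A`; since
a `K`-Lipschitz `f` moves by at most `Kε` on the `ε`-thickening of a superlevel set, the
layer-cake formula turns this into `∫ f dμ - ∫ f dν ≤ ε (K + 2C)` whenever `|f| ≤ C`. A norming
functional (Hahn–Banach) transfers the bound to vector-valued `f`. Every `ΦK ∘ φ ψ` is bounded
by `B` and `LK Lφ`-Lipschitz, so the supremum over `ψ` is at most `π(Pₙ, P) (LK Lφ + 2B) → 0`.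
-/

open MeasureTheory Filter
open scoped Topology

open Set Metric NNReal BoundedContinuousFunction

lemma integrableOn_Ioc_measureReal_of_antitone {Ω : Type*} [MeasurableSpace Ω] {ν : Measure Ω}
    [IsFiniteMeasure ν] {S : ℝ → Set Ω} (hS : Antitone S) (a b : ℝ) :
    IntegrableOn (fun t => ν.real (S t)) (Ioc a b) :=
  ((Antitone.locallyIntegrable fun _ _ hst => measureReal_mono (hS hst)).integrableOn_isCompact
    isCompact_Icc).mono_set Ioc_subset_Icc_self

section LevyProkhorov

variable {Ω : Type*} [MeasurableSpace Ω] [PseudoMetricSpace Ω] [OpensMeasurableSpace Ω]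
  {μ ν : Measure Ω}

lemma integral_le_integral_add_of_levyProkhorovEDist_lt_of_nonneg
    [IsFiniteMeasure μ] [IsProbabilityMeasure ν] {ε : ℝ} (hε : 0 < ε)
    (hμν : levyProkhorovEDist μ ν < ENNReal.ofReal ε) {f : Ω → ℝ} {K : ℝ≥0} {M : ℝ}
    (hf : LipschitzWith K f) (hf_nn : ∀ x, 0 ≤ f x) (hfM : ∀ x, f x ≤ M) :
    ∫ x, f x ∂μ ≤ ∫ x, f x ∂ν + ε * (K + M) := by
  obtain ⟨x₀⟩ := nonempty_of_isProbabilityMeasure ν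
  have hM : 0 ≤ M := (hf_nn x₀).trans (hfM x₀)
  set g : Ω →ᵇ ℝ := .ofNormedAddCommGroup f hf.continuous M fun x => by
    rw [Real.norm_of_nonneg (hf_nn x)]; exact hfM x
  have hgM : ‖g‖ ≤ M := norm_ofNormedAddCommGroup_le _ hM _
  have h_thick (t : ℝ) : thickening ε {x | t ≤ g x} ⊆ {x | t ≤ f x + K * ε} := by
    intro x hx
    obtain ⟨z, hz, hzx⟩ := mem_thickening_iff.1 hx
    have h_lip : f z - f x ≤ K * ε := calc
      f z - f x ≤ dist (f z) (f x) := (le_abs_self _).trans (Real.dist_eq _ _).ge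
      _ ≤ K * dist z x := hf.dist_le_mul z x
      _ ≤ K * ε := by rw [dist_comm]; gcongr
    exact (show t ≤ f z from hz).trans (by linarith)
  have h_anti : Antitone fun t : ℝ => {x | t ≤ f x + K * ε} :=
    fun _ _ hst _ hx => hst.trans hx
  have h_anti_thick : Antitone fun t : ℝ => thickening ε {x | t ≤ g x} :=
    fun _ _ hst => thickening_subset_of_subset ε fun _ hx => hst.trans hx
  have hf_int : Integrable f ν := g.integrable ν
  have h_layer :
      ∫ x, f x + K * ε ∂ν = ∫ t in Ioc 0 (M + K * ε), ν.real {x | t ≤ f x + K * ε} :=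
    Integrable.integral_eq_integral_Ioc_meas_le (hf_int.add (integrable_const _))
      (Eventually.of_forall fun x => add_nonneg (hf_nn x) (by positivity))
      (Eventually.of_forall fun x => add_le_add_left (hfM x) _)
  calc ∫ x, f x ∂μ = ∫ x, g x ∂μ := rfl
    _ ≤ (∫ t in Ioc 0 ‖g‖, ν.real (thickening ε {x | t ≤ g x})) + ε * ‖g‖ :=
      g.integral_le_of_levyProkhorovEDist_lt μ ν hε hμν (Eventually.of_forall hf_nn)
    _ ≤ (∫ t in Ioc 0 ‖g‖, ν.real {x | t ≤ f x + K * ε}) + ε * M := by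
      gcongr ?_ + ?_
      · refine setIntegral_mono_on ?_ (integrableOn_Ioc_measureReal_of_antitone h_anti _ _)
          measurableSet_Ioc fun t _ => measureReal_mono (h_thick t)
        exact integrableOn_Ioc_measureReal_of_antitone h_anti_thick _ _
      · gcongr
    _ ≤ (∫ t in Ioc 0 (M + K * ε), ν.real {x | t ≤ f x + K * ε}) + ε * M := by
      gcongr ?_ + _
      refine setIntegral_mono_set (integrableOn_Ioc_measureReal_of_antitone h_anti _ _)
        (Eventually.of_forall fun _ => measureReal_nonneg) (Ioc_subset_Ioc_right ?_).eventuallyLE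
      linarith [mul_nonneg K.coe_nonneg hε.le]
    _ = ∫ x, f x ∂ν + ε * (K + M) := by
      rw [← h_layer, integral_add hf_int (integrable_const _), integral_const, probReal_univ,
        one_smul]
      ring

lemma integral_sub_integral_le_levyProkhorovDist_mul [IsProbabilityMeasure μ]
    [IsProbabilityMeasure ν] {f : Ω → ℝ} {K : ℝ≥0} {C : ℝ} (hf : LipschitzWith K f)
    (hfC : ∀ x, |f x| ≤ C) :
    ∫ x, f x ∂μ - ∫ x, f x ∂ν ≤ levyProkhorovDist μ ν * (K + 2 * C) := by
  have hf_shift : LipschitzWith K fun x => f x + C := LipschitzWith.of_dist_le_mul fun x y => by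
    simpa only [Real.dist_eq, add_sub_add_right_eq_sub] using hf.dist_le_mul x y
  have h_shift_int (ρ : Measure Ω) [IsProbabilityMeasure ρ] :
      ∫ x, f x + C ∂ρ = ∫ x, f x ∂ρ + C := by
    rw [integral_add (Integrable.of_bound hf.continuous.aestronglyMeasurable C
      (ae_of_all _ hfC)) (integrable_const C), integral_const, probReal_univ, one_smul]
  have h_lt (ε : ℝ) (hε : levyProkhorovDist μ ν < ε) :
      ∫ x, f x ∂μ - ∫ x, f x ∂ν ≤ ε * (K + 2 * C) := by
    have hε_pos : 0 < ε := ENNReal.toReal_nonneg.trans_lt hε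
    have hμν : levyProkhorovEDist μ ν < ENNReal.ofReal ε :=
      (ENNReal.lt_ofReal_iff_toReal_lt (levyProkhorovEDist_ne_top μ ν)).2 hε
    have h := integral_le_integral_add_of_levyProkhorovEDist_lt_of_nonneg hε_pos hμν hf_shift
      (M := 2 * C) (fun x => by linarith [neg_abs_le (f x), hfC x])
      (fun x => by linarith [le_abs_self (f x), hfC x])
    rw [h_shift_int, h_shift_int] at h
    linarith
  exact ge_of_tendsto (x := 𝓝[>] levyProkhorovDist μ ν)
    ((tendsto_nhdsWithin_of_tendsto_nhds tendsto_id).mul_const _)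
    (eventually_nhdsWithin_of_forall h_lt)

lemma norm_integral_sub_integral_le_levyProkhorovDist_mul {E : Type*} [NormedAddCommGroup E]
    [NormedSpace ℝ E] [CompleteSpace E] [SecondCountableTopologyEither Ω E]
    [IsProbabilityMeasure μ] [IsProbabilityMeasure ν]
    {F : Ω → E} {K : ℝ≥0} {C : ℝ} (hF : LipschitzWith K F) (hFC : ∀ x, ‖F x‖ ≤ C) :
    ‖∫ x, F x ∂μ - ∫ x, F x ∂ν‖ ≤ levyProkhorovDist μ ν * (K + 2 * C) := by
  obtain ⟨L, hL, hL_eq⟩ := exists_dual_vector'' ℝ (∫ x, F x ∂μ - ∫ x, F x ∂ν)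
  have hF_int (ρ : Measure Ω) [IsFiniteMeasure ρ] : Integrable F ρ :=
    .of_bound hF.continuous.aestronglyMeasurable C (ae_of_all _ hFC)
  have hLF : LipschitzWith K (L ∘ F) :=
    (L.lipschitz.comp hF).weaken (mul_le_of_le_one_left K.coe_nonneg (by exact_mod_cast hL))
  have hLF_bdd (x : Ω) : |L (F x)| ≤ C :=
    (L.le_of_opNorm_le hL (F x)).trans (by rw [one_mul]; exact hFC x)
  calc ‖∫ x, F x ∂μ - ∫ x, F x ∂ν‖ = L (∫ x, F x ∂μ) - L (∫ x, F x ∂ν) := by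
        rw [← map_sub, hL_eq]
        rfl
    _ = ∫ x, L (F x) ∂μ - ∫ x, L (F x) ∂ν := by
        rw [L.integral_comp_comm (hF_int μ), L.integral_comp_comm (hF_int ν)]
    _ ≤ levyProkhorovDist μ ν * (K + 2 * C) :=
        integral_sub_integral_le_levyProkhorovDist_mul hLF hLF_bdd

lemma tendsto_levyProkhorovDist_of_tendsto [TopologicalSpace.SeparableSpace Ω] {ι : Type*}
    {l : Filter ι} {P : ι → ProbabilityMeasure Ω} {P₀ : ProbabilityMeasure Ω}
    (h : Tendsto P l (𝓝 P₀)) :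
    Tendsto (fun i => levyProkhorovDist (P i : Measure Ω) P₀) l (𝓝 0) :=
  tendsto_iff_dist_tendsto_zero.1
    ((LevyProkhorov.continuous_ofMeasure_probabilityMeasure.tendsto P₀).comp h)

end LevyProkhorov

/-- If the feature map `Φ_K : ℝ^s → H` is bounded and `L_K`-Lipschitz and
the family `φ ψ : ℝ^d → ℝ^s` is uniformly `L_φ`-Lipschitz, then the optimized MMD
`sup_ψ MMD_{k_ψ}(P_n, P)` with `k_ψ = K ∘ φ_ψ` tends to `0` whenever `P_n` converges
weakly (in distribution) to `P`. -/
theorem optimized_mmd_tendsto_zero_of_weak_convergence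
    {d s : ℕ} {H : Type*} [NormedAddCommGroup H] [InnerProductSpace ℝ H] [CompleteSpace H]
    (ΦK : EuclideanSpace ℝ (Fin s) → H)
    (B LK : ℝ) (hB : ∀ a, ‖ΦK a‖ ≤ B)
    (hLK : ∀ a b, ‖ΦK a - ΦK b‖ ≤ LK * ‖a - b‖)
    {Ψ : Type*} (φ : Ψ → EuclideanSpace ℝ (Fin d) → EuclideanSpace ℝ (Fin s))
    (Lφ : ℝ) (hφLip : ∀ ψ x y, ‖φ ψ x - φ ψ y‖ ≤ Lφ * ‖x - y‖)
    (P : ℕ → ProbabilityMeasure (EuclideanSpace ℝ (Fin d)))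
    (P₀ : ProbabilityMeasure (EuclideanSpace ℝ (Fin d)))
    (hconv : Tendsto P atTop (𝓝 P₀)) :
    Tendsto
      (fun n => ⨆ ψ : Ψ,
        ‖(∫ x, ΦK (φ ψ x) ∂(P n : Measure (EuclideanSpace ℝ (Fin d)))) -
          ∫ x, ΦK (φ ψ x) ∂(P₀ : Measure (EuclideanSpace ℝ (Fin d)))‖)
      atTop (𝓝 0) := by
  have hB_nn : 0 ≤ B := (norm_nonneg _).trans (hB 0)
  have hΦK : LipschitzWith LK.toNNReal ΦK :=
    .of_dist_le' fun a b => by simpa only [dist_eq_norm] using hLK a b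
  have hφ (ψ : Ψ) : LipschitzWith Lφ.toNNReal (φ ψ) :=
    .of_dist_le' fun x y => by simpa only [dist_eq_norm] using hφLip ψ x y
  have h_bound (n : ℕ) (ψ : Ψ) :=
    norm_integral_sub_integral_le_levyProkhorovDist_mul (μ := P n) (ν := P₀)
      (hΦK.comp (hφ ψ)) fun x => hB (φ ψ x)
  refine squeeze_zero (fun n => Real.iSup_nonneg fun ψ => norm_nonneg _)
    (fun n => Real.iSup_le (h_bound n) (mul_nonneg ENNReal.toReal_nonneg (by positivity))) ?_
  simpa using (tendsto_levyProkhorovDist_of_tendsto hconv).mul_const _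
end

section
/- Let H be a real Hilbert space, N ∈ ℕ, T : H → ℝ^N a bounded linear operator with adjoint T* : ℝ^N → H, let M > 0 and λ > 0, and define D = (1/M) T* T + λ·id on H. Then for every η ∈ H: ( sup { ⟨f, η⟩ : f ∈ H, ⟨f, D f⟩ ≤ 1 } )² = (1/λ) ( ‖η‖² − ⟨ T η, (T T* + M λ I_N)⁻¹ T η ⟩ ), where T T* + M λ I_N is a positive-definite (hence invertible) N × N matrix. -/
open ContinuousLinearMap


open scoped RealInnerProductSpace

set_option maxHeartbeats 1000000 in
set_option linter.unnecessarySeqFocus false in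
/-- For a bounded operator `T : H → ℝ^N`, `M, λ > 0`, and
`D = (1/M) T* T + λ·id`, the operator `T T* + Mλ I_N` on `ℝ^N` is positive definite,
hence invertible, and for every `η ∈ H`,
`(sup { ⟪f, η⟫ : ⟪f, D f⟫ ≤ 1 })² = (1/λ)(‖η‖² − ⟪T η, (T T* + Mλ I)⁻¹ T η⟫)`. -/
theorem gcmmd_closed_form
    {H : Type*} [NormedAddCommGroup H] [InnerProductSpace ℝ H] [CompleteSpace H]
    (N : ℕ) (T : H →L[ℝ] EuclideanSpace ℝ (Fin N))
    (M lam : ℝ) (hM : 0 < M) (hlam : 0 < lam) :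
    (∀ v : EuclideanSpace ℝ (Fin N), v ≠ 0 →
      0 < ⟪v, (T ∘L ContinuousLinearMap.adjoint T
          + (M * lam) • ContinuousLinearMap.id ℝ (EuclideanSpace ℝ (Fin N))) v⟫) ∧
    ∃ Sinv : EuclideanSpace ℝ (Fin N) →L[ℝ] EuclideanSpace ℝ (Fin N),
      (T ∘L ContinuousLinearMap.adjoint T
          + (M * lam) • ContinuousLinearMap.id ℝ (EuclideanSpace ℝ (Fin N))) ∘L Sinv =
        ContinuousLinearMap.id ℝ (EuclideanSpace ℝ (Fin N)) ∧
      Sinv ∘L (T ∘L ContinuousLinearMap.adjoint T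
          + (M * lam) • ContinuousLinearMap.id ℝ (EuclideanSpace ℝ (Fin N))) =
        ContinuousLinearMap.id ℝ (EuclideanSpace ℝ (Fin N)) ∧
      ∀ η : H,
        (sSup {r : ℝ | ∃ f : H,
            ⟪f, ((1 / M) • (ContinuousLinearMap.adjoint T ∘L T)
                + lam • ContinuousLinearMap.id ℝ H) f⟫ ≤ 1 ∧ r = ⟪f, η⟫}) ^ 2 =
          (1 / lam) * (‖η‖ ^ 2 - ⟪T η, Sinv (T η)⟫) := by
  set E := EuclideanSpace ℝ (Fin N)
  set S : E →L[ℝ] E := T ∘L adjoint T + (M * lam) • ContinuousLinearMap.id ℝ E with hSdef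
  set D : H →L[ℝ] H := (1 / M) • (adjoint T ∘L T) + lam • ContinuousLinearMap.id ℝ H with hDdef
  -- inner with S
  have hSinner : ∀ v : E, ⟪v, S v⟫ = ‖(adjoint T) v‖ ^ 2 + (M * lam) * ‖v‖ ^ 2 := by
    intro v
    simp only [hSdef, add_apply, comp_apply, smul_apply, id_apply, inner_add_right,
      real_inner_smul_right]
    rw [← adjoint_inner_left T, real_inner_self_eq_norm_sq, real_inner_self_eq_norm_sq]
  have hSpos : ∀ v : E, v ≠ 0 → 0 < ⟪v, S v⟫ := by
    intro v hv
    rw [hSinner]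
    have : 0 < ‖v‖ ^ 2 := pow_pos (norm_pos_iff.mpr hv) 2
    nlinarith [sq_nonneg ‖(adjoint T) v‖, mul_pos hM hlam]
  refine ⟨hSpos, ?_⟩
  -- S is bijective
  have hSinj : Function.Injective S := by
    intro a b hab
    have h : S (a - b) = 0 := by rw [map_sub, hab, sub_self]
    by_contra hne
    have : a - b ≠ 0 := sub_ne_zero.mpr hne
    have := hSpos _ this
    rw [h, inner_zero_right] at this
    exact lt_irrefl _ this
  have hSbij : Function.Bijective S :=
    ⟨hSinj, (LinearMap.injective_iff_surjective (f := S.toLinearMap)).mp hSinj⟩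
  set e : E ≃L[ℝ] E := (LinearEquiv.ofBijective S.toLinearMap hSbij).toContinuousLinearEquiv
    with hedef
  have he : ∀ x : E, e x = S x := fun x => rfl
  refine ⟨(e.symm : E →L[ℝ] E), ?_, ?_, ?_⟩
  · ext v
    simp only [coe_comp', Function.comp_apply, ContinuousLinearEquiv.coe_coe, coe_id', id_eq]
    rw [← he, e.apply_symm_apply]
  · ext v
    simp only [coe_comp', Function.comp_apply, ContinuousLinearEquiv.coe_coe, coe_id', id_eq]
    rw [← he, e.symm_apply_apply]
  intro η
  -- basic facts about D
  have hDinner : ∀ a b : H, ⟪a, D b⟫ = (1 / M) * ⟪T a, T b⟫ + lam * ⟪a, b⟫ := by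
    intro a b
    simp only [hDdef, add_apply, comp_apply, smul_apply, id_apply, inner_add_right,
      real_inner_smul_right]
    rw [← adjoint_inner_right T]
  have hDpos : ∀ a : H, 0 ≤ ⟪a, D a⟫ := by
    intro a
    rw [hDinner, real_inner_self_eq_norm_sq, real_inner_self_eq_norm_sq]
    have h1 : 0 ≤ (1 / M) * ‖T a‖ ^ 2 := by positivity
    nlinarith [sq_nonneg ‖a‖]
  have hDsymm : ∀ a b : H, ⟪a, D b⟫ = ⟪b, D a⟫ := by
    intro a b
    rw [hDinner, hDinner, real_inner_comm a b, real_inner_comm (T a) (T b)]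
  have hDlow : ∀ a : H, lam * ‖a‖ ^ 2 ≤ ⟪a, D a⟫ := by
    intro a
    rw [hDinner, real_inner_self_eq_norm_sq, real_inner_self_eq_norm_sq]
    have h1 : 0 ≤ (1 / M) * ‖T a‖ ^ 2 := by positivity
    linarith
  -- Cauchy–Schwarz for the bilinear form ⟪·, D ·⟫
  have hCS : ∀ a b : H, ⟪a, D b⟫ ^ 2 ≤ ⟪a, D a⟫ * ⟪b, D b⟫ := by
    intro a b
    by_cases hb : b = 0
    · simp [hb]
    · have hc : 0 < ⟪b, D b⟫ := by
        have h1 : 0 < ‖b‖ ^ 2 := pow_pos (norm_pos_iff.mpr hb) 2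
        have := hDlow b
        nlinarith
      have h0 : 0 ≤ ⟪⟪b, D b⟫ • a - ⟪a, D b⟫ • b, D (⟪b, D b⟫ • a - ⟪a, D b⟫ • b)⟫ := hDpos _
      have hexp : ⟪⟪b, D b⟫ • a - ⟪a, D b⟫ • b, D (⟪b, D b⟫ • a - ⟪a, D b⟫ • b)⟫
          = ⟪b, D b⟫ ^ 2 * ⟪a, D a⟫ - ⟪b, D b⟫ * ⟪a, D b⟫ * ⟪a, D b⟫
            - ⟪a, D b⟫ * ⟪b, D b⟫ * ⟪b, D a⟫ + ⟪a, D b⟫ ^ 2 * ⟪b, D b⟫ := by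
        rw [map_sub, map_smul, map_smul]
        simp only [inner_sub_left, inner_sub_right, real_inner_smul_left, real_inner_smul_right]
        ring
      rw [hexp, hDsymm b a] at h0
      nlinarith [h0, hc]
  -- the vector g with D g = η
  set w : E := e.symm (T η) with hwdef
  have hw : T ((adjoint T) w) + (M * lam) • w = T η := by
    have : S w = T η := by rw [← he, hwdef, e.apply_symm_apply]
    simpa [hSdef, add_apply, comp_apply, smul_apply, id_apply] using this
  set g : H := (1 / lam) • (η - (adjoint T) w) with hgdef
  have hDg : D g = η := by
    have hTg : T ((adjoint T) w) = T η - (M * lam) • w := by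
      rw [← hw]; abel
    simp only [hgdef, hDdef, map_smul, map_sub, add_apply, comp_apply, smul_apply, id_apply]
    rw [hTg, map_sub, map_smul]
    match_scalars <;> field_simp <;> ring
  have hq : ⟪g, η⟫ = (1 / lam) * (‖η‖ ^ 2 - ⟪T η, (e.symm : E →L[ℝ] E) (T η)⟫) := by
    rw [hgdef]
    rw [real_inner_smul_left, inner_sub_left, real_inner_self_eq_norm_sq]
    congr 2
    rw [adjoint_inner_left, hwdef, real_inner_comm]
    rfl
  rw [← hq]
  -- now compute the sup
  have hgDg : ⟪g, D g⟫ = ⟪g, η⟫ := by rw [hDg]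
  by_cases hg0 : g = 0
  · have hη : η = 0 := by rw [← hDg, hg0, map_zero]
    have hset : {r : ℝ | ∃ f : H, ⟪f, D f⟫ ≤ 1 ∧ r = ⟪f, η⟫} = {0} := by
      ext r
      simp only [Set.mem_setOf_eq, Set.mem_singleton_iff, hη, inner_zero_right]
      constructor
      · rintro ⟨f, _, rfl⟩; rfl
      · rintro rfl
        exact ⟨0, by rw [map_zero, inner_zero_right]; exact zero_le_one, rfl⟩
    rw [hset, csSup_singleton, hg0, inner_zero_left]
    ring
  · have hc : 0 < ⟪g, η⟫ := by
      rw [← hgDg]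
      have h1 : 0 < ‖g‖ ^ 2 := pow_pos (norm_pos_iff.mpr hg0) 2
      have := hDlow g
      nlinarith
    set c : ℝ := Real.sqrt ⟪g, η⟫ with hcdef
    have hcpos : 0 < c := Real.sqrt_pos.mpr hc
    have hc2 : c ^ 2 = ⟪g, η⟫ := Real.sq_sqrt hc.le
    have hGreat : IsGreatest {r : ℝ | ∃ f : H, ⟪f, D f⟫ ≤ 1 ∧ r = ⟪f, η⟫} c := by
      constructor
      · refine ⟨c⁻¹ • g, ?_, ?_⟩
        · rw [map_smul, real_inner_smul_left, real_inner_smul_right, hgDg, ← hc2]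
          rw [← mul_assoc]
          rw [show c⁻¹ * c⁻¹ * c ^ 2 = (c⁻¹ * c) ^ 2 by ring, inv_mul_cancel₀ hcpos.ne', one_pow]
        · rw [real_inner_smul_left, ← hc2]
          field_simp
      · rintro r ⟨f, hf1, rfl⟩
        have := hCS f g
        rw [hgDg] at this
        have h2 : ⟪f, D g⟫ = ⟪f, η⟫ := by rw [hDg]
        rw [h2] at this
        have h3 : ⟪f, η⟫ ^ 2 ≤ ⟪g, η⟫ := by
          calc ⟪f, η⟫ ^ 2 ≤ ⟪f, D f⟫ * ⟪g, η⟫ := this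
            _ ≤ 1 * ⟪g, η⟫ := by nlinarith
            _ = ⟪g, η⟫ := one_mul _
        rw [← hc2] at h3
        nlinarith
    rw [hGreat.csSup_eq, hc2]
end

section
/- Let φ_ψ : ℝ^d → ℝ^{d_L} be a leaky-ReLU network with leak coefficient α ∈ (0,1), nonincreasing widths d ≥ d_1 ≥ ⋯ ≥ d_L ≥ 1, and parameters ψ ∈ Ψ^κ_1 (every weight matrix W^l has operator norm 1 and condition number at most κ < ∞). Then the set N_ψ = { X ∈ ℝ^d : there exist l ∈ {1,…,L} and k ∈ {1,…,d_l} with (h^l_ψ(X))_k = 0 } of inputs at which some intermediate pre-activation vanishes has Lebesgue measure zero. -/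
open MeasureTheory

noncomputable section

/-- Reinterpret a plain vector `Fin n → ℝ` as a point of Euclidean space (`ℓ²` norm). -/
def toE {n : ℕ} (x : Fin n → ℝ) : EuclideanSpace ℝ (Fin n) := WithLp.toLp 2 x

/-- Leaky-ReLU with leak coefficient `α`: `σ(t) = t` for `t > 0` and `αt` for `t ≤ 0`. -/
def lrelu (α t : ℝ) : ℝ := if 0 < t then t else α * t

/-- Elementwise leaky-ReLU on `ℝⁿ`. -/
def lreluVec (α : ℝ) {n : ℕ} (x : EuclideanSpace ℝ (Fin n)) : EuclideanSpace ℝ (Fin n) :=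
  WithLp.toLp 2 (fun k => lrelu α (x k))

/-- The leaky-ReLU network: `h⁰(X) = X`, `hˡ(X) = Wˡ σ_{l-1}(h^{l-1}(X)) + bˡ`
(with `σ₀ = id` and `σ_l` the elementwise leaky-ReLU for `l ≥ 1`); here `W l`, `b l`
denote the weights/biases of layer `l + 1`, and `net α dims W b l` is `hˡ`. -/
def net (α : ℝ) (dims : ℕ → ℕ)
    (W : ∀ l : ℕ, Matrix (Fin (dims (l + 1))) (Fin (dims l)) ℝ)
    (b : ∀ l : ℕ, EuclideanSpace ℝ (Fin (dims (l + 1)))) :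
    (l : ℕ) → EuclideanSpace ℝ (Fin (dims 0)) → EuclideanSpace ℝ (Fin (dims l))
  | 0, X => X
  | (l + 1), X =>
      toE ((W l).mulVec (if l = 0 then net α dims W b l X else lreluVec α (net α dims W b l X)))
        + b l

/-- The (Euclidean) operator norm `σ_max(W) = sup_{x ≠ 0} ‖Wx‖/‖x‖`. -/
def opNorm {m n : ℕ} (W : Matrix (Fin m) (Fin n) ℝ) : ℝ :=
  sSup {r : ℝ | ∃ x : EuclideanSpace ℝ (Fin n), x ≠ 0 ∧ r = ‖toE (W.mulVec x)‖ / ‖x‖}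

/-- The smallest singular value of a (possibly wide) matrix `W : ℝ^{m×n}` with `m ≤ n`,
computed through its transpose: `σ_min(W) = inf_{y ≠ 0} ‖Wᵀy‖/‖y‖`. -/
def sigmaMin {m n : ℕ} (W : Matrix (Fin m) (Fin n) ℝ) : ℝ :=
  sInf {r : ℝ | ∃ y : EuclideanSpace ℝ (Fin m), y ≠ 0 ∧ r = ‖toE (W.transpose.mulVec y)‖ / ‖y‖}

/-- Condition number `cond(W) = σ_max(W)/σ_min(W)` of a full-rank matrix. -/
def condNum {m n : ℕ} (W : Matrix (Fin m) (Fin n) ℝ) : ℝ := opNorm W / sigmaMin W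


/-! Every layer `y ↦ W σ(y) + b` is a leaky ReLU, which is antilipschitz because `α > 0`,
followed by a linear map that is surjective because `W` has full row rank, and a translation.
Each of these pulls Lebesgue-null sets back to null sets (the leaky ReLU by comparing Lebesgue
with Hausdorff measure, the linear map because it pushes Lebesgue measure forward to a multiple
of Lebesgue measure), hence so does every `hˡ`. The set `N_ψ` is therefore a finite union of
preimages of coordinate hyperplanes under the maps `hˡ`. -/

open MeasureTheory Measure Module Function

section Haar

variable {E F : Type*} [NormedAddCommGroup E] [NormedSpace ℝ E] [MeasurableSpace E]
  [BorelSpace E] [FiniteDimensional ℝ E] [NormedAddCommGroup F] [NormedSpace ℝ F]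
  [MeasurableSpace F] [BorelSpace F]
  (μ : Measure E) [IsAddHaarMeasure μ] (ν : Measure F) [IsAddHaarMeasure ν]

theorem LinearMap.quasiMeasurePreserving_of_surjective {f : E →ₗ[ℝ] F} (hf : Surjective f) :
    QuasiMeasurePreserving f μ ν := by
  obtain ⟨c, -, hc⟩ := f.exists_map_addHaar_eq_smul_addHaar μ ν hf
  exact ⟨f.continuous_of_finiteDimensional.measurable, hc ▸ smul_absolutelyContinuous⟩

theorem AntilipschitzWith.quasiMeasurePreserving {f : E → E} {K : NNReal}
    (hf : AntilipschitzWith K f) (hfm : Measurable f) : QuasiMeasurePreserving f μ μ := by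
  have hH : map f μH[finrank ℝ E] ≪ μH[finrank ℝ E] :=
    AbsolutelyContinuous.mk fun s hs hs0 => by
      rw [map_apply hfm hs]
      simpa [hs0] using hf.hausdorffMeasure_preimage_le (Nat.cast_nonneg (finrank ℝ E)) s
  exact ⟨hfm, ((absolutelyContinuous_isAddHaarMeasure μ μH[finrank ℝ E]).map hfm).trans
    (hH.trans (absolutelyContinuous_isAddHaarMeasure _ μ))⟩

end Haar

theorem EuclideanSpace.addHaar_setOf_apply_eq_zero {ι : Type*} [Fintype ι] [DecidableEq ι]
    (μ : Measure (EuclideanSpace ℝ ι)) [IsAddHaarMeasure μ] (k : ι) :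
    μ {y | y k = 0} = 0 := by
  have hproj : Surjective (EuclideanSpace.proj k : EuclideanSpace ℝ ι →L[ℝ] ℝ) :=
    fun t => ⟨EuclideanSpace.single k t, by simp⟩
  exact (LinearMap.quasiMeasurePreserving_of_surjective μ volume
    (f := (EuclideanSpace.proj k).toLinearMap) hproj).preimage_null (measure_singleton 0)

theorem Matrix.toEuclideanLin_surjective {𝕜 m n : Type*} [RCLike 𝕜] [Fintype m] [Fintype n]
    [DecidableEq n] {A : Matrix m n 𝕜} (hA : A.rank = Fintype.card m) :
    Surjective (toEuclideanLin A) := by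
  rw [← LinearMap.range_eq_top]
  apply Submodule.eq_top_of_finrank_eq
  rw [finrank_euclideanSpace, ← hA,
    rank_eq_finrank_range_toLin A (PiLp.basisFun 2 𝕜 m) (PiLp.basisFun 2 𝕜 n)]
  rfl

section LeakyReLU

variable {α : ℝ}

theorem mul_sub_le_lrelu_sub_lrelu (hα : α ≤ 1) {s t : ℝ} (hts : t ≤ s) :
    α * (s - t) ≤ lrelu α s - lrelu α t := by
  unfold lrelu
  split_ifs <;> nlinarith

theorem mul_abs_sub_le_abs_lrelu_sub (hα : α ≤ 1) (s t : ℝ) :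
    α * |s - t| ≤ |lrelu α s - lrelu α t| := by
  rcases le_total t s with hts | hst
  · rw [abs_of_nonneg (sub_nonneg.2 hts)]
    exact (mul_sub_le_lrelu_sub_lrelu hα hts).trans (le_abs_self _)
  · rw [abs_sub_comm s, abs_sub_comm (lrelu α s), abs_of_nonneg (sub_nonneg.2 hst)]
    exact (mul_sub_le_lrelu_sub_lrelu hα hst).trans (le_abs_self _)

@[fun_prop]
theorem measurable_lrelu : Measurable (lrelu α) :=
  Measurable.ite measurableSet_Ioi measurable_id (measurable_const_mul α)

theorem measurable_lreluVec {n : ℕ} : Measurable (lreluVec α (n := n)) := by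
  unfold lreluVec
  fun_prop

theorem antilipschitzWith_lreluVec (hα0 : 0 < α) (hα1 : α ≤ 1) (n : ℕ) :
    AntilipschitzWith (Real.toNNReal α)⁻¹ (lreluVec α (n := n)) := by
  refine AntilipschitzWith.of_le_mul_dist fun x y => ?_
  rw [NNReal.coe_inv, Real.coe_toNNReal _ hα0.le, inv_mul_eq_div, le_div_iff₀' hα0,
    EuclideanSpace.dist_eq, EuclideanSpace.dist_eq, Real.le_sqrt (by positivity) (by positivity),
    mul_pow, Real.sq_sqrt (by positivity), Finset.mul_sum]
  refine Finset.sum_le_sum fun k _ => ?_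
  simpa [Real.dist_eq, lreluVec, mul_pow, sq_abs] using
    pow_le_pow_left₀ (by positivity) (mul_abs_sub_le_abs_lrelu_sub hα1 (x k) (y k)) 2

end LeakyReLU

theorem net_succ (α : ℝ) (dims : ℕ → ℕ)
    (W : ∀ l : ℕ, Matrix (Fin (dims (l + 1))) (Fin (dims l)) ℝ)
    (b : ∀ l : ℕ, EuclideanSpace ℝ (Fin (dims (l + 1)))) (l : ℕ) :
    net α dims W b (l + 1) = (· + b l) ∘ Matrix.toEuclideanLin (W l) ∘
      (fun y => if l = 0 then y else lreluVec α y) ∘ net α dims W b l := by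
  funext X
  by_cases hl : l = 0 <;> simp [net, hl, toE, Matrix.toLpLin_apply]

theorem quasiMeasurePreserving_net {α : ℝ} (hα0 : 0 < α) (hα1 : α ≤ 1) {L : ℕ}
    {dims : ℕ → ℕ}
    {W : ∀ l : ℕ, Matrix (Fin (dims (l + 1))) (Fin (dims l)) ℝ}
    (b : ∀ l : ℕ, EuclideanSpace ℝ (Fin (dims (l + 1))))
    (hrank : ∀ l < L, (W l).rank = dims (l + 1)) :
    ∀ l ≤ L, QuasiMeasurePreserving (net α dims W b l) volume volume
  | 0, _ => .id volume
  | l + 1, hl => by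
    have hact : QuasiMeasurePreserving
        (fun y : EuclideanSpace ℝ (Fin (dims l)) => if l = 0 then y else lreluVec α y)
        volume volume := by
      by_cases hl0 : l = 0
      · simpa only [hl0, if_true] using .id volume
      · simpa only [hl0, if_false] using
          (antilipschitzWith_lreluVec hα0 hα1 _).quasiMeasurePreserving volume measurable_lreluVec
    have hW : Surjective (Matrix.toEuclideanLin (W l)) :=
      Matrix.toEuclideanLin_surjective ((hrank l hl).trans (Fintype.card_fin _).symm)
    rw [net_succ]
    exact (measurePreserving_add_right volume (b l)).quasiMeasurePreserving.comp
      (((LinearMap.quasiMeasurePreserving_of_surjective volume volume hW).comp hact).comp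
        (quasiMeasurePreserving_net hα0 hα1 b hrank l (Nat.le_of_succ_le hl)))

theorem preactivation_zero_set_null_general
    (α : ℝ) (hα : α ∈ Set.Ioo (0 : ℝ) 1)
    (L : ℕ) (dims : ℕ → ℕ)
    (W : ∀ l : ℕ, Matrix (Fin (dims (l + 1))) (Fin (dims l)) ℝ)
    (b : ∀ l : ℕ, EuclideanSpace ℝ (Fin (dims (l + 1))))
    (hrank : ∀ l < L, (W l).rank = dims (l + 1)) :
    volume {X : EuclideanSpace ℝ (Fin (dims 0)) |
      ∃ l, 1 ≤ l ∧ l ≤ L ∧ ∃ k : Fin (dims l), net α dims W b l X k = 0} = 0 := by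
  have hnet := quasiMeasurePreserving_net hα.1 hα.2.le b hrank
  refine measure_mono_null ?_ (measure_iUnion_null fun l : Fin (L + 1) =>
    measure_iUnion_null fun k : Fin (dims l) =>
      (hnet l l.is_le).preimage_null (EuclideanSpace.addHaar_setOf_apply_eq_zero volume k))
  rintro X ⟨l, -, hlL, k, hk⟩
  exact Set.mem_iUnion₂.2 ⟨⟨l, Nat.lt_succ_of_le hlL⟩, k, hk⟩

/-- For a leaky-ReLU network with leak `α ∈ (0,1)`, nonincreasing layer
widths, and normalized well-conditioned full-rank weights (`ψ ∈ Ψ^κ₁`), the set `N_ψ` of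
inputs at which some intermediate pre-activation vanishes has Lebesgue measure zero. -/
theorem preactivation_zero_set_null
    (α : ℝ) (hα : α ∈ Set.Ioo (0 : ℝ) 1)
    (L : ℕ) (dims : ℕ → ℕ)
    (hmono : ∀ l < L, dims (l + 1) ≤ dims l) (hdL : 1 ≤ dims L)
    (W : ∀ l : ℕ, Matrix (Fin (dims (l + 1))) (Fin (dims l)) ℝ)
    (b : ∀ l : ℕ, EuclideanSpace ℝ (Fin (dims (l + 1))))
    (κ : ℝ)
    (hrank : ∀ l < L, (W l).rank = dims (l + 1))
    (hopnorm : ∀ l < L, opNorm (W l) = 1)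
    (hcond : ∀ l < L, condNum (W l) ≤ κ) :
    volume {X : EuclideanSpace ℝ (Fin (dims 0)) |
      ∃ l, 1 ≤ l ∧ l ≤ L ∧ ∃ k : Fin (dims l), net α dims W b l X k = 0} = 0 :=
  preactivation_zero_set_null_general α hα L dims W b hrank

end
end
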